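/- For the polynomial P_6(z) = z + ((9+8√2)/(4√2+8))z² + ((6√2+10)/(4√2+8))z³ + ((4√2+6)/(4√2+8))z⁴ + ((2√2+2)/(4√2+8))z⁵ + (1/(4√2+8))z⁶ and every real t, one has |P_6(e^{it})| ≥ (1/4)·sec²(π/8), with equality when t = π. -/

import Mathlib

/-- The polynomial `P₆(z) = z + ((9+8√2)/(4√2+8))z² + ((6√2+10)/(4√2+8))z³ + ((4√2+6)/(4√2+8))z⁴
+ ((2√2+2)/(4√2+8))z⁵ + (1/(4√2+8))z⁶`. -/
noncomputable def P6 (z : ℂ) : ℂ :=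
  z + (((9 + 8 * Real.sqrt 2) / (4 * Real.sqrt 2 + 8) : ℝ) : ℂ) * z ^ 2 +
    (((6 * Real.sqrt 2 + 10) / (4 * Real.sqrt 2 + 8) : ℝ) : ℂ) * z ^ 3 +
    (((4 * Real.sqrt 2 + 6) / (4 * Real.sqrt 2 + 8) : ℝ) : ℂ) * z ^ 4 +
    (((2 * Real.sqrt 2 + 2) / (4 * Real.sqrt 2 + 8) : ℝ) : ℂ) * z ^ 5 +
    ((1 / (4 * Real.sqrt 2 + 8) : ℝ) : ℂ) * z ^ 6

/-!
On the unit circle `z⁻¹ = conj z`, and the coefficients of `P₆` are real, so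
`‖P₆ z‖² = P₆ z · P₆ z⁻¹` is a polynomial in `a = Re z = (z + z⁻¹)/2`. It equals
`(1 - √2/2)² + (1 + a) q(a)` for the quartic `q = P6Quartic`, which is positive on all of `ℝ`.
Since `a ≥ -1` this gives `‖P₆ z‖ ≥ 1 - √2/2`, with equality at `z = -1`; and
`1 - √2/2 = sec²(π/8)/4` because `cos²(π/8) = (1 + cos(π/4))/2 = (2 + √2)/4`.
-/

open ComplexConjugate Real

noncomputable def P6Quartic (a : ℝ) : ℝ :=
  (√2 - 1) + √2 * a + (19 / 2 - 4 * √2) * a ^ 2 + (11 * √2 - 21 / 2) * a ^ 3 +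
    (8 - 4 * √2) * a ^ 4

lemma sq_sqrt_two : √2 ^ 2 = 2 := sq_sqrt zero_le_two

lemma quarter_mul_sec_sq_pi_div_eight :
    1 / 4 * (1 / cos (π / 8)) ^ 2 = 1 - √2 / 2 := by
  have hcos : cos (π / 8) ^ 2 = (2 + √2) / 4 := by
    rw [cos_sq, show 2 * (π / 8) = π / 4 by ring, cos_pi_div_four]
    ring
  rw [div_pow, one_pow, hcos]
  field_simp
  linear_combination sq_sqrt_two

-- With `√2 ∈ [1.414, 1.415]`, `P6Quartic a` is a positive combination of `(a² + 27a/25 + 1/6)²`,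
-- `(a + 7/8)²` and a constant.
lemma P6Quartic_pos (a : ℝ) : 0 < P6Quartic a := by
  have hlo : (1.414 : ℝ) ≤ √2 := by nlinarith [sqrt_nonneg 2, sq_sqrt_two]
  have hhi : √2 ≤ (1.415 : ℝ) := by nlinarith [sqrt_nonneg 2, sq_sqrt_two]
  unfold P6Quartic
  nlinarith [mul_nonneg (sub_nonneg.2 hlo) (sq_nonneg (a ^ 2 + 27 / 25 * a + 1 / 6)),
    mul_nonneg (sub_nonneg.2 hhi) (sq_nonneg (a ^ 2 + 27 / 25 * a + 1 / 6)),
    mul_nonneg (sub_nonneg.2 hlo) (sq_nonneg (a + 7 / 8)),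
    mul_nonneg (sub_nonneg.2 hhi) (sq_nonneg (a + 7 / 8))]

lemma P6_eq (z : ℂ) :
    P6 z = z + ((1 / 4 + 7 / 8 * √2 : ℝ) : ℂ) * z ^ 2 + ((1 + 1 / 4 * √2 : ℝ) : ℂ) * z ^ 3 +
      ((1 / 2 + 1 / 4 * √2 : ℝ) : ℂ) * z ^ 4 + ((1 / 4 * √2 : ℝ) : ℂ) * z ^ 5 +
      ((1 / 4 - 1 / 8 * √2 : ℝ) : ℂ) * z ^ 6 := by
  have hd : 4 * √2 + 8 ≠ 0 := by positivity
  rw [P6, div_eq_of_eq_mul hd (c := 1 / 4 + 7 / 8 * √2), div_eq_of_eq_mul hd (c := 1 + 1 / 4 * √2),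
    div_eq_of_eq_mul hd (c := 1 / 2 + 1 / 4 * √2), div_eq_of_eq_mul hd (c := 1 / 4 * √2),
    div_eq_of_eq_mul hd (c := 1 / 4 - 1 / 8 * √2)] <;> linarith [sq_sqrt_two]

lemma P6_conj (z : ℂ) : conj (P6 z) = P6 (conj z) := by
  simp only [P6, map_add, map_mul, map_pow, Complex.conj_ofReal]

lemma P6_mul_P6_inv {z : ℂ} {a : ℝ} (hz : z ≠ 0) (ha : z + z⁻¹ = 2 * a) :
    P6 z * P6 z⁻¹ = (((1 - √2 / 2) ^ 2 + (1 + a) * P6Quartic a : ℝ) : ℂ) := by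
  have hs : ((√2 : ℝ) : ℂ) ^ 2 = 2 := by exact_mod_cast sq_sqrt_two
  have ha' : (a : ℂ) = (z + z⁻¹) / 2 := by rw [ha]; ring
  rw [P6_eq, P6_eq, P6Quartic]
  push_cast
  rw [ha']
  field_simp
  ring_nf
  rw [hs]
  ring

lemma norm_P6_sq_of_norm_eq_one {z : ℂ} (hz : ‖z‖ = 1) :
    ‖P6 z‖ ^ 2 = (1 - √2 / 2) ^ 2 + (1 + z.re) * P6Quartic z.re := by
  have hz₀ : z ≠ 0 := norm_ne_zero_iff.1 (hz ▸ one_ne_zero)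
  have hinv : z⁻¹ = conj z := Complex.inv_eq_conj hz
  have hre : z + z⁻¹ = 2 * z.re := by rw [hinv, Complex.add_conj]; push_cast; ring
  have h := P6_mul_P6_inv hz₀ hre
  rw [hinv, ← P6_conj, Complex.mul_conj'] at h
  exact_mod_cast h

lemma one_sub_sqrt_two_div_two_le_norm_P6 {z : ℂ} (hz : ‖z‖ = 1) : 1 - √2 / 2 ≤ ‖P6 z‖ := by
  have hre : 0 ≤ 1 + z.re := by linarith [neg_abs_le z.re, Complex.abs_re_le_norm z]
  refine le_of_pow_le_pow_left₀ two_ne_zero (norm_nonneg _) ?_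
  rw [norm_P6_sq_of_norm_eq_one hz]
  exact le_add_of_nonneg_right (mul_nonneg hre (P6Quartic_pos z.re).le)

lemma norm_P6_neg_one : ‖P6 (-1)‖ = 1 - √2 / 2 := by
  have hpos : 0 ≤ 1 - √2 / 2 := by linarith [sqrt_two_lt_three_halves]
  have h := norm_P6_sq_of_norm_eq_one (z := -1) (by simp)
  rw [Complex.neg_re, Complex.one_re, add_neg_cancel, zero_mul, add_zero] at h
  exact (pow_left_inj₀ (norm_nonneg _) hpos two_ne_zero).1 h

theorem stmt16 :
    (∀ t : ℝ, (1 / 4) * (1 / Real.cos (Real.pi / 8)) ^ 2 ≤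
        ‖P6 (Complex.exp (Complex.I * t))‖) ∧
      ‖P6 (Complex.exp (Complex.I * Real.pi))‖ =
        (1 / 4) * (1 / Real.cos (Real.pi / 8)) ^ 2 := by
  rw [quarter_mul_sec_sq_pi_div_eight]
  refine ⟨fun t => one_sub_sqrt_two_div_two_le_norm_P6 ?_, ?_⟩
  · rw [mul_comm, Complex.norm_exp_ofReal_mul_I]
  · rw [mul_comm, Complex.exp_pi_mul_I, norm_P6_neg_one]
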